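/- arXiv:2205.01258 — 2 statements merged into one kernel-verified Lean document; each statement's English description precedes it below -/
import Mathlib

section
/- Let X be a finite set with |X| ≥ 2 and let d be a metric on X. Then there exist a finite action set W with |W| ≥ 2, a loss function ℓ : W → X → ℝ with ℓ w x ≥ 0 that is non-trivial (there is no single action w* ∈ W with ℓ w* x ≤ ℓ w x for all w ∈ W and all x ∈ X), and a d-private channel M : X → Y → ℝ (for some finite nonempty Y) such that M is universally ℓ-optimal within the d-privacy type. -/
open Finset

/-- A channel from `X` to `Y`: nonnegative entries and each row sums to 1. -/
def IsChannel {X Y : Type} [Fintype Y] (M : X → Y → ℝ) : Prop :=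
  (∀ x y, 0 ≤ M x y) ∧ ∀ x, ∑ y, M x y = 1

/-- The `d`-privacy constraints on a channel. -/
def IsPrivate {X Y : Type} (d : X → X → ℝ) (M : X → Y → ℝ) : Prop :=
  ∀ x x' y, M x y ≤ Real.exp (d x x') * M x' y

/-- `d` is a metric on `X`. -/
def IsMetric {X : Type} (d : X → X → ℝ) : Prop :=
  (∀ x, d x x = 0) ∧ (∀ x x' : X, x ≠ x' → 0 < d x x') ∧
    (∀ x x', d x x' = d x' x) ∧ ∀ x y z, d x z ≤ d x y + d y z

/-- A prior on `X`. -/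
def IsPrior {X : Type} [Fintype X] (π : X → ℝ) : Prop :=
  (∀ x, 0 ≤ π x) ∧ ∑ x, π x = 1

/-- Posterior expected loss `U_ℓ[π⟩M]`. -/
noncomputable def postLoss {X Y W : Type} [Fintype X] [Fintype Y] [Fintype W] [Nonempty W]
    (π : X → ℝ) (M : X → Y → ℝ) (ℓ : W → X → ℝ) : ℝ :=
  ∑ y, Finset.univ.inf' Finset.univ_nonempty fun w => ∑ x, π x * M x y * ℓ w x

/-- Universal `ℓ`-optimality within the `d`-privacy type. -/
def UnivOptimal {X W Y : Type} [Fintype X] [Fintype W] [Nonempty W] [Fintype Y]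
    (d : X → X → ℝ) (M : X → Y → ℝ) (ℓ : W → X → ℝ) : Prop :=
  ∀ (Y' : Type) [Fintype Y'] [Nonempty Y'] (M' : X → Y' → ℝ),
    IsChannel M' → IsPrivate d M' →
      ∀ π : X → ℝ, IsPrior π → postLoss π M ℓ ≤ postLoss π M' ℓ

/-!
Choose `a ≠ b` at minimal distance `ε` and let action `w` cost one unit exactly when the secret
is the `w`-th of `a, b`. The posterior loss of any channel `M` is then
`∑ y, min (π a * M a y) (π b * M b y)`. Privacy puts the pair of rows `(M a, M b)` in the cone
spanned by `(e^ε, 1)` and `(1, e^ε)`; writing it in that basis and using concavity of `min`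
bounds this sum below by the value of binary randomized response with parameter `ε`. As all
distinct points are at distance at least `ε`, randomized response (answering as `a` does at
every input other than `b`) is itself `d`-private.
-/

lemma exists_closest_pair {X : Type} [Fintype X] (hX : 1 < Fintype.card X) (d : X → X → ℝ) :
    ∃ a b, a ≠ b ∧ ∀ x x', x ≠ x' → d a b ≤ d x x' := by
  classical
  obtain ⟨a₀, b₀, hab₀⟩ := Fintype.exists_pair_of_one_lt_card hX
  obtain ⟨⟨a, b⟩, hab, hmin⟩ := (univ : Finset X).offDiag.exists_min_image
    (fun q => d q.1 q.2) ⟨(a₀, b₀), by simpa using hab₀⟩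
  exact ⟨a, b, (mem_offDiag.mp hab).2.2, fun x x' h => hmin (x, x') (by simpa using h)⟩

section PointLoss

variable {X : Type} [DecidableEq X]

def pointLoss (a b : X) : Fin 2 → X → ℝ :=
  fun w x => if x = ![a, b] w then 1 else 0

lemma pointLoss_nonneg (a b : X) (w : Fin 2) (x : X) : 0 ≤ pointLoss a b w x := by
  unfold pointLoss
  split_ifs <;> norm_num

lemma not_exists_dominant_pointLoss {a b : X} (hab : a ≠ b) :
    ¬ ∃ w₀, ∀ w x, pointLoss a b w₀ x ≤ pointLoss a b w x := by
  rintro ⟨w₀, hw₀⟩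
  fin_cases w₀
  · have := hw₀ 1 a
    simp [pointLoss, hab] at this
    linarith
  · have := hw₀ 0 b
    simp [pointLoss, hab.symm] at this
    linarith

lemma postLoss_pointLoss [Fintype X] {Y : Type} [Fintype Y] (π : X → ℝ) (M : X → Y → ℝ)
    (a b : X) :
    postLoss π M (pointLoss a b) = ∑ y, min (π a * M a y) (π b * M b y) := by
  unfold postLoss pointLoss
  simp only [mul_ite, mul_one, mul_zero, sum_ite_eq', mem_univ, if_true]
  rfl

end PointLoss

/-- Concavity of `min` along `(u, v) = s • (β, 1) + t • (1, β)`, multiplied through by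
`β ^ 2 - 1` so that `s = (β * u - v) / (β ^ 2 - 1)` and `t = (β * v - u) / (β ^ 2 - 1)`
appear without division. -/
lemma min_mul_add_min_mul_le_min_mul {β p q u v : ℝ} (hβ : 1 ≤ β) (huv : u ≤ β * v)
    (hvu : v ≤ β * u) :
    min (β * p) q * (β * u - v) + min p (β * q) * (β * v - u) ≤
      (β ^ 2 - 1) * min (p * u) (q * v) := by
  have hs : 0 ≤ β * u - v := by linarith
  have ht : 0 ≤ β * v - u := by linarith
  rw [mul_min_of_nonneg _ _ (by nlinarith)]
  apply le_min
  · calc _ ≤ β * p * (β * u - v) + p * (β * v - u) :=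
          add_le_add (mul_le_mul_of_nonneg_right (min_le_left _ _) hs)
            (mul_le_mul_of_nonneg_right (min_le_left _ _) ht)
      _ = (β ^ 2 - 1) * (p * u) := by ring
  · calc _ ≤ q * (β * u - v) + β * q * (β * v - u) :=
          add_le_add (mul_le_mul_of_nonneg_right (min_le_right _ _) hs)
            (mul_le_mul_of_nonneg_right (min_le_right _ _) ht)
      _ = (β ^ 2 - 1) * (q * v) := by ring

lemma le_sum_min_mul_of_ratio_le {Y : Type} [Fintype Y] {β : ℝ} (hβ : 1 < β) {u v : Y → ℝ}
    (hu : ∑ y, u y = 1) (hv : ∑ y, v y = 1) (huv : ∀ y, u y ≤ β * v y)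
    (hvu : ∀ y, v y ≤ β * u y) (p q : ℝ) :
    (min (β * p) q + min p (β * q)) / (1 + β) ≤ ∑ y, min (p * u y) (q * v y) := by
  have hsum : ∑ y, (min (β * p) q * (β * u y - v y) + min p (β * q) * (β * v y - u y)) =
      (min (β * p) q + min p (β * q)) * (β - 1) := by
    simp only [sum_add_distrib, ← mul_sum, sum_sub_distrib, hu, hv]
    ring
  rw [div_le_iff₀ (by linarith)]
  refine le_of_mul_le_mul_left ?_ (sub_pos.2 hβ)
  calc (β - 1) * (min (β * p) q + min p (β * q))
      = ∑ y, (min (β * p) q * (β * u y - v y) + min p (β * q) * (β * v y - u y)) := by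
        rw [hsum, mul_comm]
    _ ≤ ∑ y, (β ^ 2 - 1) * min (p * u y) (q * v y) :=
        sum_le_sum fun y _ => min_mul_add_min_mul_le_min_mul hβ.le (huv y) (hvu y)
    _ = (β - 1) * ((∑ y, min (p * u y) (q * v y)) * (1 + β)) := by
        rw [← mul_sum]; ring

section RandomizedResponse

variable {X : Type} [DecidableEq X]

noncomputable def randomizedResponse (ε : ℝ) (b x : X) : Fin 2 → ℝ :=
  if x = b then ![1 / (1 + Real.exp ε), Real.exp ε / (1 + Real.exp ε)]
  else ![Real.exp ε / (1 + Real.exp ε), 1 / (1 + Real.exp ε)]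

lemma isChannel_randomizedResponse (ε : ℝ) (b : X) : IsChannel (randomizedResponse ε b) := by
  have hsum : 1 / (1 + Real.exp ε) + Real.exp ε / (1 + Real.exp ε) = 1 := by
    rw [← add_div, div_self (by positivity)]
  refine ⟨fun x y => ?_, fun x => ?_⟩
  · unfold randomizedResponse
    fin_cases y <;> split_ifs <;> simp <;> positivity
  · unfold randomizedResponse
    split_ifs
    · simpa [Fin.sum_univ_two] using hsum
    · simpa [Fin.sum_univ_two, add_comm] using hsum

lemma randomizedResponse_mem_Icc {ε : ℝ} (hε : 0 ≤ ε) (b x : X) (y : Fin 2) :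
    randomizedResponse ε b x y ∈
      Set.Icc (1 / (1 + Real.exp ε)) (Real.exp ε / (1 + Real.exp ε)) := by
  have h : (1 + Real.exp ε)⁻¹ ≤ Real.exp ε / (1 + Real.exp ε) := by
    rw [inv_eq_one_div]
    exact div_le_div_of_nonneg_right (Real.one_le_exp hε) (by positivity)
  unfold randomizedResponse
  fin_cases y <;> split_ifs <;> simp [h]

lemma isPrivate_randomizedResponse {d : X → X → ℝ} {ε : ℝ} (hε : 0 ≤ ε)
    (hd : ∀ x, d x x = 0) (hdε : ∀ x x', x ≠ x' → ε ≤ d x x') (b : X) :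
    IsPrivate d (randomizedResponse ε b) := by
  intro x x' y
  obtain rfl | hne := eq_or_ne x x'
  · simp [hd]
  obtain ⟨-, hx⟩ := randomizedResponse_mem_Icc hε b x y
  obtain ⟨hx', -⟩ := randomizedResponse_mem_Icc hε b x' y
  calc randomizedResponse ε b x y ≤ Real.exp ε * (1 / (1 + Real.exp ε)) := by
        rwa [mul_one_div]
    _ ≤ Real.exp (d x x') * randomizedResponse ε b x' y :=
        mul_le_mul (Real.exp_le_exp.2 (hdε x x' hne)) hx' (by positivity) (by positivity)

lemma sum_min_randomizedResponse {ε : ℝ} {a b : X} (hab : a ≠ b) (p q : ℝ) :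
    ∑ y, min (p * randomizedResponse ε b a y) (q * randomizedResponse ε b b y) =
      (min (Real.exp ε * p) q + min p (Real.exp ε * q)) / (1 + Real.exp ε) := by
  have h : 0 ≤ 1 + Real.exp ε := by positivity
  simp only [randomizedResponse, hab, if_false, if_true, Fin.sum_univ_two, Matrix.cons_val_zero,
    Matrix.cons_val_one, mul_div_assoc', mul_one, min_div_div_right h, add_div]
  ring_nf

end RandomizedResponse

/-- Universal optimality existence: every privacy type on at least two inputs
contains a mechanism universally `ℓ`-optimal for some non-trivial
nonnegative loss function `ℓ`. -/
theorem exists_nontrivial_universally_optimal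
    {X : Type} [Fintype X] (hcard : 2 ≤ Fintype.card X)
    (d : X → X → ℝ) (hd : IsMetric d) :
    ∃ (k : ℕ) (ℓ : Fin (k + 2) → X → ℝ)
      (m : ℕ) (M : X → Fin (m + 1) → ℝ),
      (∀ w x, 0 ≤ ℓ w x) ∧
      (¬ ∃ wstar : Fin (k + 2), ∀ (w : Fin (k + 2)) (x : X), ℓ wstar x ≤ ℓ w x) ∧
      IsChannel M ∧ IsPrivate d M ∧ UnivOptimal d M ℓ := by
  classical
  obtain ⟨hd_self, hd_pos, hd_symm, -⟩ := hd
  obtain ⟨a, b, hab, hclosest⟩ := exists_closest_pair hcard d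
  have hε := hd_pos a b hab
  refine ⟨0, pointLoss a b, 1, randomizedResponse (d a b) b, pointLoss_nonneg a b,
    not_exists_dominant_pointLoss hab, isChannel_randomizedResponse _ b,
    isPrivate_randomizedResponse hε.le hd_self hclosest b, ?_⟩
  intro Y' _ _ M' hM' hM'_private π _
  rw [postLoss_pointLoss, postLoss_pointLoss, sum_min_randomizedResponse hab]
  exact le_sum_min_mul_of_ratio_le (Real.one_lt_exp_iff.2 hε) (hM'.2 a) (hM'.2 b)
    (hM'_private a b) (fun y => hd_symm a b ▸ hM'_private b a y) (π a) (π b)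
end

section
/- Let X be a finite nonempty set with a metric d, and let M : X → Y → ℝ be a d-private channel. Define ℓ_bin, ℓ_nib : X → X → ℝ on action set W = X by ℓ_bin w x = (0 if w = x else 1) and ℓ_nib w x = (1 if w = x else 0). (i) If M is universally ℓ_bin-optimal within the d-privacy type, then for every finite nonempty Y' and every d-private channel M' : X → Y' → ℝ one has Σ_{y∈Y} max_{x∈X} M x y ≥ Σ_{y'∈Y'} max_{x∈X} M' x y' (M has maximal multiplicative Bayes capacity in the type). (ii) If M is universally ℓ_nib-optimal within the d-privacy type, then for every such M' one has Σ_{y∈Y} min_{x∈X} M x y ≤ Σ_{y'∈Y'} min_{x∈X} M' x y' (M has maximal additive Bayes capacity in the type). -/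
/-!
Under the uniform prior the posterior expected loss of a channel `N` is a strictly decreasing
affine function of its Bayes capacity: for `ℓ_bin` it is `1 - |X|⁻¹ · Σ_y max_x N x y`, and for
`ℓ_nib` it is `|X|⁻¹ · Σ_y min_x N x y`. Comparing the losses of `M` and of any other channel of
the privacy type under this single prior therefore compares their capacities.
-/

open Finset

theorem Finset.inf'_const_sub {ι α : Type*} [AddCommGroup α] [LinearOrder α]
    [IsOrderedAddMonoid α] (s : Finset ι) (hs : s.Nonempty) (f : ι → α) (a : α) :
    s.inf' hs (fun i => a - f i) = a - s.sup' hs f :=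
  (map_finset_sup' (OrderIso.subLeft a) hs f).symm

theorem Finset.mul₀_inf' {ι G₀ : Type*} [GroupWithZero G₀] [SemilatticeInf G₀]
    [PosMulReflectLT G₀] {a : G₀} (ha : 0 ≤ a) (f : ι → G₀) (s : Finset ι) (hs : s.Nonempty) :
    a * s.inf' hs f = s.inf' hs fun i => a * f i := by
  rcases ha.eq_or_lt with rfl | ha
  · simp
  · exact map_finset_inf' (OrderIso.mulLeft₀ a ha) hs f

noncomputable def uniformPrior (X : Type) [Fintype X] : X → ℝ := fun _ => (Fintype.card X : ℝ)⁻¹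

theorem isPrior_uniformPrior {X : Type} [Fintype X] [Nonempty X] : IsPrior (uniformPrior X) :=
  ⟨fun _ => by simp [uniformPrior], by simp [uniformPrior]⟩

section Losses

variable {X : Type} [DecidableEq X]

def binLoss (w x : X) : ℝ := if w = x then 0 else 1

def nibLoss (w x : X) : ℝ := if w = x then 1 else 0

theorem binLoss_eq_one_sub_nibLoss (w x : X) : binLoss w x = 1 - nibLoss w x := by
  unfold binLoss nibLoss
  split_ifs <;> norm_num

variable [Fintype X]

theorem sum_mul_nibLoss (f : X → ℝ) (w : X) : ∑ x, f x * nibLoss w x = f w := by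
  simp [nibLoss]

variable {Y : Type} [Fintype Y] [Nonempty X]

theorem postLoss_binLoss (π : X → ℝ) (hπ : ∑ x, π x = 1) (N : X → Y → ℝ)
    (hN : ∀ x, ∑ y, N x y = 1) :
    postLoss π N binLoss = 1 - ∑ y, univ.sup' univ_nonempty fun x => π x * N x y := by
  have total : ∑ y, ∑ x, π x * N x y = 1 := by
    rw [Finset.sum_comm]
    simp_rw [mul_comm (π _), ← Finset.sum_mul, hN, one_mul, hπ]
  simp only [postLoss, binLoss_eq_one_sub_nibLoss, mul_sub, mul_one, Finset.sum_sub_distrib,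
    sum_mul_nibLoss, Finset.inf'_const_sub, total]

theorem postLoss_nibLoss (π : X → ℝ) (N : X → Y → ℝ) :
    postLoss π N nibLoss = ∑ y, univ.inf' univ_nonempty fun x => π x * N x y := by
  simp only [postLoss, sum_mul_nibLoss]

theorem postLoss_uniformPrior_binLoss (N : X → Y → ℝ) (hN : ∀ x, ∑ y, N x y = 1) :
    postLoss (uniformPrior X) N binLoss
      = 1 - (Fintype.card X : ℝ)⁻¹ * ∑ y, univ.sup' univ_nonempty fun x => N x y := by
  rw [postLoss_binLoss _ isPrior_uniformPrior.2 N hN, Finset.mul_sum]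
  have hc : (0 : ℝ) ≤ (Fintype.card X : ℝ)⁻¹ := by positivity
  simp only [uniformPrior, Finset.mul₀_sup' hc]

theorem postLoss_uniformPrior_nibLoss (N : X → Y → ℝ) :
    postLoss (uniformPrior X) N nibLoss
      = (Fintype.card X : ℝ)⁻¹ * ∑ y, univ.inf' univ_nonempty fun x => N x y := by
  rw [postLoss_nibLoss, Finset.mul_sum]
  have hc : (0 : ℝ) ≤ (Fintype.card X : ℝ)⁻¹ := by positivity
  simp only [uniformPrior, Finset.mul₀_inf' hc]

end Losses

theorem universally_optimal_capacity_general
    {X Y : Type} [Fintype X] [Nonempty X] [DecidableEq X]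
    [Fintype Y]
    (d : X → X → ℝ)
    (M : X → Y → ℝ) (hM : IsChannel M) :
    (UnivOptimal d M (fun (w x : X) => if w = x then (0 : ℝ) else 1) →
      ∀ (Y' : Type) (_ : Fintype Y') (_ : Nonempty Y') (M' : X → Y' → ℝ),
        IsChannel M' → IsPrivate d M' →
          (∑ y', Finset.univ.sup' Finset.univ_nonempty fun x => M' x y')
            ≤ ∑ y, Finset.univ.sup' Finset.univ_nonempty fun x => M x y) ∧
    (UnivOptimal d M (fun (w x : X) => if w = x then (1 : ℝ) else 0) →
      ∀ (Y' : Type) (_ : Fintype Y') (_ : Nonempty Y') (M' : X → Y' → ℝ),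
        IsChannel M' → IsPrivate d M' →
          (∑ y, Finset.univ.inf' Finset.univ_nonempty fun x => M x y)
            ≤ ∑ y', Finset.univ.inf' Finset.univ_nonempty fun x => M' x y') := by
  have hc : (0 : ℝ) < (Fintype.card X : ℝ)⁻¹ := by
    have := Fintype.card_pos (α := X)
    positivity
  constructor
  · intro hopt Y' _ _ M' hM' hM'p
    have h : postLoss (uniformPrior X) M binLoss ≤ postLoss (uniformPrior X) M' binLoss :=
      hopt Y' M' hM' hM'p _ isPrior_uniformPrior
    rw [postLoss_uniformPrior_binLoss M hM.2, postLoss_uniformPrior_binLoss M' hM'.2] at h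
    exact le_of_mul_le_mul_left (by linarith) hc
  · intro hopt Y' _ _ M' hM' hM'p
    have h : postLoss (uniformPrior X) M nibLoss ≤ postLoss (uniformPrior X) M' nibLoss :=
      hopt Y' M' hM' hM'p _ isPrior_uniformPrior
    rw [postLoss_uniformPrior_nibLoss, postLoss_uniformPrior_nibLoss] at h
    exact le_of_mul_le_mul_left h hc

/-- Universal optimal capacity: (i) a universally `ℓ_bin`-optimal mechanism
has maximal multiplicative Bayes capacity in its privacy type; (ii) a
universally `ℓ_nib`-optimal mechanism has maximal additive Bayes capacity. -/
theorem universally_optimal_capacity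
    {X Y : Type} [Fintype X] [Nonempty X] [DecidableEq X]
    [Fintype Y] [Nonempty Y]
    (d : X → X → ℝ) (hd : IsMetric d)
    (M : X → Y → ℝ) (hM : IsChannel M) (hMp : IsPrivate d M) :
    (UnivOptimal d M (fun (w x : X) => if w = x then (0 : ℝ) else 1) →
      ∀ (Y' : Type) (_ : Fintype Y') (_ : Nonempty Y') (M' : X → Y' → ℝ),
        IsChannel M' → IsPrivate d M' →
          (∑ y', Finset.univ.sup' Finset.univ_nonempty fun x => M' x y')
            ≤ ∑ y, Finset.univ.sup' Finset.univ_nonempty fun x => M x y) ∧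
    (UnivOptimal d M (fun (w x : X) => if w = x then (1 : ℝ) else 0) →
      ∀ (Y' : Type) (_ : Fintype Y') (_ : Nonempty Y') (M' : X → Y' → ℝ),
        IsChannel M' → IsPrivate d M' →
          (∑ y, Finset.univ.inf' Finset.univ_nonempty fun x => M x y)
            ≤ ∑ y', Finset.univ.inf' Finset.univ_nonempty fun x => M' x y') :=
  universally_optimal_capacity_general d M hM
end
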